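/- Let f : G → H be a semi-planar function between finite abelian groups of the same even order k > 2, and suppose the incidence graph of S(G,H;f) is not connected. Then the set A = {a ∈ G : P_a^1 = P_0^1} is a subgroup of G, and either A = G or A has index 2 in G. -/

import Mathlib

/-- A function `f : G → H` is *semi-planar* if for every nonzero `a : G` and every
`y : H`, the equation `f (x + a) - f x = y` has either 0 or exactly 2 solutions. -/
def IsSemiPlanar {G H : Type*} [AddGroup G] [AddGroup H] (f : G → H) : Prop :=
  ∀ a : G, a ≠ 0 → ∀ y : H,
    Nat.card {x : G // f (x + a) - f x = y} = 0 ∨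
    Nat.card {x : G // f (x + a) - f x = y} = 2

/-- The point `p = (x, y)` is incident with the line `l = L(a, b)` iff `y = f (x - a) + b`. -/
def Incid {G H : Type*} [Sub G] [Add H] (f : G → H) (p l : G × H) : Prop :=
  p.2 = f (p.1 - l.1) + l.2

/-- The adjacency relation of the incidence graph of `S(G,H;f)`: points on the left,
lines on the right, a point adjacent to a line iff incident. -/
def IncAdj {G H : Type*} [Sub G] [Add H] (f : G → H) :
    (G × H) ⊕ (G × H) → (G × H) ⊕ (G × H) → Prop
  | Sum.inl p, Sum.inr l => Incid f p l
  | Sum.inr l, Sum.inl p => Incid f p l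
  | _, _ => False

/-- The incidence graph of `S(G,H;f)`. -/
def incGraph {G H : Type*} [Sub G] [Add H] (f : G → H) :
    SimpleGraph ((G × H) ⊕ (G × H)) where
  Adj := IncAdj f
  symm := by
    constructor
    intro v w h
    cases v <;> cases w <;> exact h
  loopless := by
    constructor
    intro v h
    cases v <;> exact h

/-- The line `L(a,b)` belongs to the substructure `S₁`, i.e. lies in the same
connected component of the incidence graph as the line `L(0,0)`. -/
def InS1 {G H : Type*} [SubtractionMonoid G] [SubNegMonoid H] (f : G → H) (l : G × H) : Prop :=
  (incGraph f).Reachable (Sum.inr l) (Sum.inr ((0 : G), (0 : H)))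

/-!
Translations of `G × H` act on points and lines simultaneously, so the lines of `S₁` form a
subgroup `K ≤ G × H`, and `A = {a | (a, 0) ∈ K}`. Since every point `(x, f x)` lies on `L(0,0)`,
`K` contains `(a, f (x + a) - f x)` for all `a, x`. Hence `a ↦ f a - f 0` induces a homomorphism
`G → H ⧸ B` with kernel `A`, where `B = {b | (0, b) ∈ K}`, so `[G : A] ≤ [H : B]`. For a fixed
`a ≠ 0` the differences `f (x + a) - f x` lie in one coset of `B`, and by semi-planarity they take
at least `|G| / 2` values; as `|G| = |H|`, this gives `[H : B] ≤ 2`.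
-/

namespace AddSubgroup

variable {G H : Type*} [AddCommGroup G] [AddCommGroup H]

theorem mk_zero_mem_iff_fiber_eq (K : AddSubgroup (G × H)) (a : G) :
    (a, 0) ∈ K ↔ {b | (a, b) ∈ K} = {b | (0, b) ∈ K} := by
  refine ⟨fun ha => Set.ext fun b => ⟨fun hb => ?_, fun hb => ?_⟩, fun h => ?_⟩
  · simpa using sub_mem hb ha
  · simpa using add_mem ha hb
  · exact (Set.ext_iff.1 h 0).2 (zero_mem K)

/-- The class of `φ a` modulo the `H`-slice of `K` does not depend on the choice of `φ a`. -/
def sliceQuotientHom (K : AddSubgroup (G × H)) (φ : G → H) (hφ : ∀ a, (a, φ a) ∈ K) :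
    G →+ H ⧸ K.comap (AddMonoidHom.inr G H) :=
  AddMonoidHom.mk' (fun a => φ a) fun a a' => by
    rw [← QuotientAddGroup.mk_add, QuotientAddGroup.eq, AddSubgroup.mem_comap, neg_add_eq_sub]
    simpa using sub_mem (add_mem (hφ a) (hφ a')) (hφ (a + a'))

theorem ker_sliceQuotientHom (K : AddSubgroup (G × H)) (φ : G → H) (hφ : ∀ a, (a, φ a) ∈ K) :
    (sliceQuotientHom K φ hφ).ker = K.comap (AddMonoidHom.inl G H) := by
  ext a
  simp only [AddMonoidHom.mem_ker, sliceQuotientHom, AddMonoidHom.mk'_apply,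
    QuotientAddGroup.eq_zero_iff, AddSubgroup.mem_comap, AddMonoidHom.inr_apply,
    AddMonoidHom.inl_apply]
  constructor <;> intro h <;> simpa using sub_mem (hφ a) h

theorem index_comap_inl_le [Finite H] (K : AddSubgroup (G × H)) (φ : G → H)
    (hφ : ∀ a, (a, φ a) ∈ K) :
    (K.comap (AddMonoidHom.inl G H)).index ≤ (K.comap (AddMonoidHom.inr G H)).index := by
  rw [← ker_sliceQuotientHom K φ hφ, AddSubgroup.index_ker]
  exact Nat.card_le_card_of_injective _ Subtype.val_injective

theorem card_range_le_card {α : Type*} [Finite H] (B : AddSubgroup H) (g : α → H)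
    (c : H) (hg : ∀ x, g x - c ∈ B) : Nat.card (Set.range g) ≤ Nat.card B := by
  have hsub : Set.range g ⊆ (· + c) '' (B : Set H) := by
    rintro _ ⟨x, rfl⟩
    exact ⟨g x - c, hg x, sub_add_cancel _ _⟩
  exact (Nat.card_mono (Set.toFinite _) hsub).trans_eq
    (Nat.card_image_of_injective (add_left_injective c) B)

end AddSubgroup

section IncidenceGraph

variable {G H : Type*} [AddCommGroup G] [AddCommGroup H] (f : G → H)

def incGraphTranslate (t : G × H) : incGraph f →g incGraph f where
  toFun := Sum.map (· + t) (· + t)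
  map_rel' {v w} h := by
    cases v <;> cases w <;> simp only [incGraph, IncAdj, Incid, Sum.map_inl, Sum.map_inr] at h ⊢
    all_goals rw [Prod.fst_add, Prod.fst_add, add_sub_add_right_eq_sub, Prod.snd_add, h,
      Prod.snd_add, add_assoc]

@[simp]
theorem incGraphTranslate_inr (t l : G × H) :
    incGraphTranslate f t (Sum.inr l) = Sum.inr (l + t) :=
  rfl

def lineComponent : AddSubgroup (G × H) where
  carrier := {l | InS1 f l}
  zero_mem' := .refl _
  add_mem' {l l'} hl hl' := by
    simp only [Set.mem_ofPred_eq, InS1, Prod.mk_zero_zero] at *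
    have hl'' := hl.map (incGraphTranslate f l')
    simp only [incGraphTranslate_inr, zero_add] at hl''
    exact hl''.trans hl'
  neg_mem' {l} hl := by
    simp only [Set.mem_ofPred_eq, InS1, Prod.mk_zero_zero] at *
    have hl' := (hl.map (incGraphTranslate f (-l))).symm
    simpa only [incGraphTranslate_inr, zero_add, add_neg_cancel] using hl'

/-- The lines `L(a, f (x + a) - f x)` and `L(0, 0)` meet in the point `(x + a, f (x + a))`. -/
theorem mk_sub_mem_lineComponent (a x : G) : (a, f (x + a) - f x) ∈ lineComponent f := by
  have hl : (incGraph f).Adj (Sum.inr (a, f (x + a) - f x)) (Sum.inl (x + a, f (x + a))) := by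
    simp [incGraph, IncAdj, Incid]
  have h0 : (incGraph f).Adj (Sum.inl (x + a, f (x + a))) (Sum.inr (0, 0)) := by
    simp [incGraph, IncAdj, Incid]
  exact hl.reachable.trans h0.reachable

end IncidenceGraph

section SemiPlanar

variable {G H : Type*} [AddCommGroup G] [AddCommGroup H]

theorem IsSemiPlanar.card_le_two_mul_card_range [Finite G] {f : G → H} (hf : IsSemiPlanar f)
    {a : G} (ha : a ≠ 0) : Nat.card G ≤ 2 * Nat.card (Set.range fun x => f (x + a) - f x) := by
  classical
  have := Fintype.ofFinite G
  rw [Nat.card_eq_fintype_card, Nat.card_eq_card_toFinset, Set.toFinset_range]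
  refine Finset.card_le_mul_card_image _ 2 fun y _ => ?_
  rw [← Fintype.card_subtype, ← Nat.card_eq_fintype_card]
  rcases hf a ha y with h | h <;> omega

theorem IsSemiPlanar.index_comap_inr_lineComponent_le_two [Finite G] [Finite H] [Nontrivial G]
    {f : G → H} (hf : IsSemiPlanar f) (hcard : Nat.card G = Nat.card H) :
    ((lineComponent f).comap (AddMonoidHom.inr G H)).index ≤ 2 := by
  obtain ⟨a, ha⟩ := exists_ne (0 : G)
  set B := (lineComponent f).comap (AddMonoidHom.inr G H)
  have hB : ∀ x, f (x + a) - f x - (f a - f 0) ∈ B := fun x => by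
    simpa [B] using sub_mem (mk_sub_mem_lineComponent f a x) (mk_sub_mem_lineComponent f a 0)
  have hGB : Nat.card G ≤ 2 * Nat.card B :=
    (hf.card_le_two_mul_card_range ha).trans (Nat.mul_le_mul_left 2 (B.card_range_le_card _ _ hB))
  refine Nat.le_of_mul_le_mul_right (c := Nat.card B) ?_ Nat.card_pos
  rwa [AddSubgroup.index_mul_card, ← hcard]

end SemiPlanar

theorem A_subgroup_general {G H : Type*} [AddCommGroup G] [AddCommGroup H]
    [Fintype G] [Fintype H]
    (hcard : Fintype.card G = Fintype.card H)
    (f : G → H) (hf : IsSemiPlanar f) :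
    ∃ A : AddSubgroup G,
      (A : Set G) = {a : G | {b : H | InS1 f (a, b)} = {b : H | InS1 f ((0 : G), b)}} ∧
      (A = ⊤ ∨ A.index = 2) := by
  set K := lineComponent f
  set A := K.comap (AddMonoidHom.inl G H)
  refine ⟨A, Set.ext fun a => K.mk_zero_mem_iff_fiber_eq a, ?_⟩
  rcases subsingleton_or_nontrivial G with _ | _
  · exact Or.inl (eq_top_iff.2 fun a _ => Subsingleton.elim 0 a ▸ zero_mem _)
  have hslice : ∀ a, (a, f a - f 0) ∈ K := fun a => by
    simpa using mk_sub_mem_lineComponent f a 0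
  have hindex : A.index ≤ 2 :=
    (K.index_comap_inl_le _ hslice).trans <| hf.index_comap_inr_lineComponent_le_two <| by
      simpa only [Nat.card_eq_fintype_card] using hcard
  have := A.index_ne_zero_of_finite
  rcases (by omega : A.index = 1 ∨ A.index = 2) with h | h
  · exact Or.inl (AddSubgroup.index_eq_one.1 h)
  · exact Or.inr h

/-- If `k > 2` and the incidence graph of `S(G,H;f)` is not connected, then
`A = {a : G | P_a^1 = P_0^1}` is a subgroup of `G` which is either all of `G` or
has index 2. -/
theorem A_subgroup {G H : Type*} [AddCommGroup G] [AddCommGroup H]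
    [Fintype G] [Fintype H]
    (hcard : Fintype.card G = Fintype.card H) (heven : Even (Fintype.card G))
    (f : G → H) (hf : IsSemiPlanar f)
    (hk : 2 < Fintype.card G) (hnc : ¬ (incGraph f).Connected) :
    ∃ A : AddSubgroup G,
      (A : Set G) = {a : G | {b : H | InS1 f (a, b)} = {b : H | InS1 f ((0 : G), b)}} ∧
      (A = ⊤ ∨ A.index = 2) :=
  A_subgroup_general hcard f hf
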